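/- arXiv:2002.07536 — 4 statements merged into one kernel-verified Lean document; each statement's English description precedes it below -/
import Mathlib

section
/- Let M be the Riemannian universal cover of the punctured plane, realized as the set {(r,ζ) : r > 0, ζ ∈ ℝ} with length metric induced by the Riemannian metric dr² + r² dζ². Then the distance from (1,ζ) to (ε,0) is at most (1 - 1/ζ²) + 1/ζ + |1/ζ² - ε| for any ζ > 1 and ε > 0; in particular, the distance from (1,ζ) to points (ε,0) stays bounded by a constant close to 1 as ζ → ∞ and ε → 0. -/
/-- Length of a (C¹) path `γ(t) = (r(t), ζ(t))`, `t ∈ [0,1]`, for the Riemannian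
metric `dr² + r² dζ²` on the universal cover of the punctured plane. -/
noncomputable def pathLength (γ : ℝ → ℝ × ℝ) : ℝ :=
  ∫ t in (0:ℝ)..1, Real.sqrt ((deriv (fun s => (γ s).1) t) ^ 2 +
    ((γ t).1) ^ 2 * (deriv (fun s => (γ s).2) t) ^ 2)

/-- The induced length distance on `M = (0,∞) × ℝ`: the infimum of lengths of
C¹ paths joining the two points and staying in the region `r > 0`. -/
noncomputable def coverDist (x y : ℝ × ℝ) : ℝ :=
  sInf {L : ℝ | ∃ γ : ℝ → ℝ × ℝ, ContDiff ℝ 1 γ ∧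
    (∀ t ∈ Set.Icc (0:ℝ) 1, 0 < (γ t).1) ∧ γ 0 = x ∧ γ 1 = y ∧ L = pathLength γ}

/-!
Run radially from `(1, ζ)` to radius `a = 1/ζ²`, along the circle of radius `a` to angle `0`,
then radially to `(ε, 0)`: the length is `(1 - a) + a ζ + |a - ε|`, and `a ζ = 1/ζ`.
Each leg is run during one third of `[0, 1]` through `Real.smoothTransition`, so the path is C¹.
The radius equals `a` while the angle moves, so the length element `√(r'² + r² ζ'²)` is at most
`|r'| + a |ζ'|`, and as every leg is monotone this integrates to the sum of the leg lengths.
-/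

open Real Set intervalIntegral

lemma sqrt_sq_add_sq_le_abs_add_abs (x y : ℝ) : √(x ^ 2 + y ^ 2) ≤ |x| + |y| :=
  Real.sqrt_le_iff.2 ⟨by positivity, by nlinarith [sq_abs x, sq_abs y, abs_nonneg x, abs_nonneg y]⟩

lemma pathLength_le_integral {γ : ℝ → ℝ × ℝ} {f : ℝ → ℝ} (hγ : ContDiff ℝ 1 γ)
    (hf : IntervalIntegrable f MeasureTheory.volume 0 1)
    (hle : ∀ t ∈ Icc (0 : ℝ) 1,
      |deriv (fun s => (γ s).1) t| + |(γ t).1 * deriv (fun s => (γ s).2) t| ≤ f t) :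
    pathLength γ ≤ ∫ t in (0 : ℝ)..1, f t := by
  have h₁ : ContDiff ℝ 1 fun s => (γ s).1 := contDiff_fst.comp hγ
  have h₂ : ContDiff ℝ 1 fun s => (γ s).2 := contDiff_snd.comp hγ
  have hcont := (h₁.continuous_deriv le_rfl).pow 2 |>.add <|
    (h₁.continuous.pow 2).mul ((h₂.continuous_deriv le_rfl).pow 2)
  refine integral_mono_on zero_le_one (hcont.sqrt.intervalIntegrable 0 1) hf fun t ht => ?_
  rw [← mul_pow]
  exact (sqrt_sq_add_sq_le_abs_add_abs _ _).trans (hle t ht)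

lemma coverDist_le_pathLength {γ : ℝ → ℝ × ℝ} {x y : ℝ × ℝ} (hγ : ContDiff ℝ 1 γ)
    (hpos : ∀ t ∈ Icc (0 : ℝ) 1, 0 < (γ t).1) (h₀ : γ 0 = x) (h₁ : γ 1 = y) :
    coverDist x y ≤ pathLength γ := by
  refine csInf_le ⟨0, ?_⟩ ⟨γ, hγ, hpos, h₀, h₁, rfl⟩
  rintro _ ⟨γ', -, -, -, -, rfl⟩
  exact integral_nonneg zero_le_one fun _ _ => Real.sqrt_nonneg _

noncomputable def thirdStep (i t : ℝ) : ℝ := smoothTransition (3 * t - i)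

section ThirdStep

variable {i t : ℝ}

lemma contDiff_thirdStep (i : ℝ) {n : ℕ∞} : ContDiff ℝ n (thirdStep i) :=
  smoothTransition.contDiff.comp ((contDiff_const.mul contDiff_id).sub contDiff_const)

lemma continuous_deriv_thirdStep (i : ℝ) : Continuous (deriv (thirdStep i)) :=
  (contDiff_thirdStep i (n := 1)).continuous_deriv le_rfl

lemma differentiable_thirdStep (i : ℝ) : Differentiable ℝ (thirdStep i) :=
  (contDiff_thirdStep i (n := 1)).differentiable one_ne_zero

lemma thirdStep_of_le (h : 3 * t ≤ i) : thirdStep i t = 0 :=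
  smoothTransition.zero_of_nonpos (by linarith)

lemma thirdStep_of_ge (h : i + 1 ≤ 3 * t) : thirdStep i t = 1 :=
  smoothTransition.one_of_one_le (by linarith)

lemma monotone_thirdStep (i : ℝ) : Monotone (thirdStep i) :=
  fun _ _ hst => smoothTransition.monotone (by linarith)

lemma deriv_thirdStep_nonneg (i t : ℝ) : 0 ≤ deriv (thirdStep i) t :=
  (monotone_thirdStep i).deriv_nonneg

/-- Outside its third the step is at its minimum `0` or its maximum `1`. -/
lemma deriv_thirdStep_eq_zero (h : 3 * t ≤ i ∨ i + 1 ≤ 3 * t) : deriv (thirdStep i) t = 0 := by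
  rcases h with h | h
  · refine IsLocalMin.deriv_eq_zero (Filter.Eventually.of_forall fun s => ?_)
    rw [thirdStep_of_le h]
    exact smoothTransition.nonneg _
  · refine IsLocalMax.deriv_eq_zero (Filter.Eventually.of_forall fun s => ?_)
    rw [thirdStep_of_ge h]
    exact smoothTransition.le_one _

lemma integral_deriv_thirdStep (h₀ : 0 ≤ i) (h₂ : i ≤ 2) :
    ∫ t in (0 : ℝ)..1, deriv (thirdStep i) t = 1 := by
  rw [integral_deriv_eq_sub (fun t _ => differentiable_thirdStep i t)
    ((continuous_deriv_thirdStep i).intervalIntegrable 0 1),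
    thirdStep_of_ge (by linarith), thirdStep_of_le (by linarith), sub_zero]

end ThirdStep

noncomputable def radialArcRadialPath (ρ θ a ε φ t : ℝ) : ℝ × ℝ :=
  (ρ + (a - ρ) * thirdStep 0 t + (ε - a) * thirdStep 2 t, θ + (φ - θ) * thirdStep 1 t)

section RadialArcRadialPath

variable {ρ θ a ε φ : ℝ}

lemma contDiff_radialArcRadialPath {n : ℕ∞} : ContDiff ℝ n (radialArcRadialPath ρ θ a ε φ) :=
  ((contDiff_const.add (contDiff_const.mul (contDiff_thirdStep 0))).add
    (contDiff_const.mul (contDiff_thirdStep 2))).prodMk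
    (contDiff_const.add (contDiff_const.mul (contDiff_thirdStep 1)))

lemma radialArcRadialPath_zero : radialArcRadialPath ρ θ a ε φ 0 = (ρ, θ) := by
  simp [radialArcRadialPath, thirdStep_of_le]

lemma radialArcRadialPath_one : radialArcRadialPath ρ θ a ε φ 1 = (ε, φ) := by
  simp (disch := norm_num) [radialArcRadialPath, thirdStep_of_ge]

/-- The radius is a convex combination of `ρ`, `a` and `ε`, as `thirdStep 2 ≤ thirdStep 0`. -/
lemma radialArcRadialPath_fst_pos (hρ : 0 < ρ) (ha : 0 < a) (hε : 0 < ε) (t : ℝ) :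
    0 < (radialArcRadialPath ρ θ a ε φ t).1 := by
  have h₂₀ : thirdStep 2 t ≤ thirdStep 0 t := smoothTransition.monotone (by linarith)
  have h₀ : thirdStep 0 t ≤ 1 := smoothTransition.le_one _
  have h₂ : 0 ≤ thirdStep 2 t := smoothTransition.nonneg _
  let m := min ρ (min a ε)
  have hm : 0 < m := lt_min hρ (lt_min ha hε)
  have hmρ : m ≤ ρ := min_le_left _ _
  have hma : m ≤ a := (min_le_right _ _).trans (min_le_left _ _)
  have hmε : m ≤ ε := (min_le_right _ _).trans (min_le_right _ _)
  simp only [radialArcRadialPath]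
  nlinarith [mul_nonneg (sub_nonneg.2 h₀) (sub_nonneg.2 hmρ),
    mul_nonneg (sub_nonneg.2 h₂₀) (sub_nonneg.2 hma), mul_nonneg h₂ (sub_nonneg.2 hmε)]

lemma deriv_radialArcRadialPath_fst (t : ℝ) :
    deriv (fun s => (radialArcRadialPath ρ θ a ε φ s).1) t =
      (a - ρ) * deriv (thirdStep 0) t + (ε - a) * deriv (thirdStep 2) t :=
  ((((differentiable_thirdStep 0 t).hasDerivAt.const_mul (a - ρ)).const_add ρ).add
    ((differentiable_thirdStep 2 t).hasDerivAt.const_mul (ε - a))).deriv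

lemma deriv_radialArcRadialPath_snd (t : ℝ) :
    deriv (fun s => (radialArcRadialPath ρ θ a ε φ s).2) t =
      (φ - θ) * deriv (thirdStep 1) t :=
  (((differentiable_thirdStep 1 t).hasDerivAt.const_mul (φ - θ)).const_add θ).deriv

/-- The angle only moves during the middle third, when the radius is `a`. -/
lemma radialArcRadialPath_fst_mul_deriv_snd (t : ℝ) :
    (radialArcRadialPath ρ θ a ε φ t).1 * deriv (fun s => (radialArcRadialPath ρ θ a ε φ s).2) t =
      a * ((φ - θ) * deriv (thirdStep 1) t) := by
  rw [deriv_radialArcRadialPath_snd]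
  by_cases hmid : 1 ≤ 3 * t ∧ 3 * t ≤ 2
  · simp [radialArcRadialPath, thirdStep_of_ge (i := 0) (by linarith),
      thirdStep_of_le (i := 2) hmid.2]
  · rw [deriv_thirdStep_eq_zero (by by_contra! h; exact hmid ⟨h.1.le, by linarith⟩)]
    simp

lemma pathLength_radialArcRadialPath_le (ha : 0 ≤ a) :
    pathLength (radialArcRadialPath ρ θ a ε φ) ≤ |a - ρ| + a * |φ - θ| + |ε - a| := by
  have hint (i : ℝ) (c : ℝ) :
      IntervalIntegrable (fun t => c * deriv (thirdStep i) t) MeasureTheory.volume 0 1 :=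
    ((continuous_deriv_thirdStep i).intervalIntegrable 0 1).const_mul c
  calc pathLength (radialArcRadialPath ρ θ a ε φ)
      ≤ ∫ t in (0 : ℝ)..1, |a - ρ| * deriv (thirdStep 0) t +
          a * |φ - θ| * deriv (thirdStep 1) t + |ε - a| * deriv (thirdStep 2) t := by
        refine pathLength_le_integral contDiff_radialArcRadialPath
          (((hint 0 _).add (hint 1 _)).add (hint 2 _)) fun t _ => ?_
        rw [deriv_radialArcRadialPath_fst, radialArcRadialPath_fst_mul_deriv_snd]
        have hr := abs_add_le ((a - ρ) * deriv (thirdStep 0) t) ((ε - a) * deriv (thirdStep 2) t)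
        simp only [abs_mul, abs_of_nonneg ha, abs_of_nonneg (deriv_thirdStep_nonneg _ t)] at hr ⊢
        linarith
    _ = |a - ρ| + a * |φ - θ| + |ε - a| := by
        rw [integral_add ((hint 0 _).add (hint 1 _)) (hint 2 _), integral_add (hint 0 _) (hint 1 _),
          integral_const_mul, integral_const_mul, integral_const_mul,
          integral_deriv_thirdStep le_rfl zero_le_two,
          integral_deriv_thirdStep zero_le_one one_le_two, integral_deriv_thirdStep zero_le_two le_rfl]
        ring

lemma coverDist_le_radialArcRadial (hρ : 0 < ρ) (ha : 0 < a) (hε : 0 < ε) :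
    coverDist (ρ, θ) (ε, φ) ≤ |a - ρ| + a * |φ - θ| + |ε - a| :=
  (coverDist_le_pathLength contDiff_radialArcRadialPath
    (fun t _ => radialArcRadialPath_fst_pos hρ ha hε t) radialArcRadialPath_zero
    radialArcRadialPath_one).trans (pathLength_radialArcRadialPath_le ha.le)

end RadialArcRadialPath

/-- Distance bound in the universal cover of the punctured plane: for ζ > 1 and
ε > 0, `d((1,ζ),(ε,0)) ≤ (1 - 1/ζ²) + 1/ζ + |1/ζ² - ε|`. -/
theorem coverDist_one_zeta_to_eps_zero_le (ζ ε : ℝ) (hζ : 1 < ζ) (hε : 0 < ε) :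
    coverDist (1, ζ) (ε, 0) ≤ (1 - 1 / ζ ^ 2) + 1 / ζ + |1 / ζ ^ 2 - ε| := by
  have hζ₀ : 0 < ζ := zero_lt_one.trans hζ
  have ha : 1 / ζ ^ 2 ≤ 1 := by rw [div_le_one (by positivity)]; nlinarith
  calc coverDist (1, ζ) (ε, 0)
      ≤ |1 / ζ ^ 2 - 1| + 1 / ζ ^ 2 * |0 - ζ| + |ε - 1 / ζ ^ 2| :=
        coverDist_le_radialArcRadial one_pos (by positivity) hε
    _ = (1 - 1 / ζ ^ 2) + 1 / ζ + |1 / ζ ^ 2 - ε| := by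
        rw [abs_of_nonpos (by linarith), zero_sub, abs_neg, abs_of_pos hζ₀, abs_sub_comm ε]
        field_simp
        ring
end

section
/- For distinct points (1,ζ) and (1,ζ') in the universal cover of the punctured plane with |ζ - ζ'| ≥ 4, the distance between them is at least 1. -/
/-!
A path from `(ρ, ζ)` to `(ρ, ζ')` either dips below the circle `r = c`, and then its radial
motion alone costs `2 (ρ - c)`, or it stays in `r ≥ c`, where every unit of angle costs at
least `c`. With `ρ = 1`, `c = 1/2` and `|ζ - ζ'| ≥ 4` both alternatives cost at least `1`.
-/

open intervalIntegral

lemma abs_sub_le_integral_abs_deriv {f : ℝ → ℝ} (hf : ContDiff ℝ 1 f) {a b : ℝ} (hab : a ≤ b) :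
    |f b - f a| ≤ ∫ t in a..b, |deriv f t| := by
  rw [← integral_deriv_eq_sub (fun x _ => (hf.differentiable one_ne_zero).differentiableAt)
    ((hf.continuous_deriv le_rfl).intervalIntegrable a b)]
  exact abs_integral_le_integral_abs hab

noncomputable def pathSpeed (γ : ℝ → ℝ × ℝ) (t : ℝ) : ℝ :=
  Real.sqrt ((deriv (fun s => (γ s).1) t) ^ 2 +
    ((γ t).1) ^ 2 * (deriv (fun s => (γ s).2) t) ^ 2)

section PathSpeed

variable {γ : ℝ → ℝ × ℝ}

lemma pathLength_eq_integral_pathSpeed (γ : ℝ → ℝ × ℝ) :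
    pathLength γ = ∫ t in (0:ℝ)..1, pathSpeed γ t := rfl

lemma continuous_pathSpeed (hγ : ContDiff ℝ 1 γ) : Continuous (pathSpeed γ) := by
  have hr : ContDiff ℝ 1 fun s => (γ s).1 := contDiff_fst.comp hγ
  have hζ : ContDiff ℝ 1 fun s => (γ s).2 := contDiff_snd.comp hγ
  exact Real.continuous_sqrt.comp <| ((hr.continuous_deriv le_rfl).pow 2).add
    ((hr.continuous.pow 2).mul ((hζ.continuous_deriv le_rfl).pow 2))

lemma abs_deriv_fst_le_pathSpeed (γ : ℝ → ℝ × ℝ) (t : ℝ) :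
    |deriv (fun s => (γ s).1) t| ≤ pathSpeed γ t := by
  rw [← Real.sqrt_sq_eq_abs]
  exact Real.sqrt_le_sqrt (le_add_of_nonneg_right (by positivity))

lemma mul_abs_deriv_snd_le_pathSpeed {c t : ℝ} (hc : c ≤ (γ t).1) :
    c * |deriv (fun s => (γ s).2) t| ≤ pathSpeed γ t := by
  calc c * |deriv (fun s => (γ s).2) t|
      ≤ |(γ t).1| * |deriv (fun s => (γ s).2) t| := by
        gcongr; exact hc.trans (le_abs_self _)
    _ = Real.sqrt (((γ t).1) ^ 2 * (deriv (fun s => (γ s).2) t) ^ 2) := by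
        rw [← abs_mul, ← Real.sqrt_sq_eq_abs, mul_pow]
    _ ≤ pathSpeed γ t := Real.sqrt_le_sqrt (le_add_of_nonneg_left (by positivity))

variable (hγ : ContDiff ℝ 1 γ) {a b : ℝ}
include hγ

lemma abs_sub_fst_le_integral_pathSpeed (hab : a ≤ b) :
    |(γ b).1 - (γ a).1| ≤ ∫ t in a..b, pathSpeed γ t := by
  have hr : ContDiff ℝ 1 fun s => (γ s).1 := contDiff_fst.comp hγ
  refine (abs_sub_le_integral_abs_deriv hr hab).trans <|
    integral_mono_on hab ((hr.continuous_deriv le_rfl).abs.intervalIntegrable a b)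
      ((continuous_pathSpeed hγ).intervalIntegrable a b)
      fun t _ => abs_deriv_fst_le_pathSpeed γ t

lemma mul_abs_sub_snd_le_integral_pathSpeed (hab : a ≤ b) {c : ℝ} (hc0 : 0 ≤ c)
    (hc : ∀ t ∈ Set.Icc a b, c ≤ (γ t).1) :
    c * |(γ b).2 - (γ a).2| ≤ ∫ t in a..b, pathSpeed γ t := by
  have hζ : ContDiff ℝ 1 fun s => (γ s).2 := contDiff_snd.comp hγ
  calc c * |(γ b).2 - (γ a).2|
      ≤ c * ∫ t in a..b, |deriv (fun s => (γ s).2) t| :=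
        mul_le_mul_of_nonneg_left (abs_sub_le_integral_abs_deriv hζ hab) hc0
    _ = ∫ t in a..b, c * |deriv (fun s => (γ s).2) t| := (integral_const_mul _ _).symm
    _ ≤ ∫ t in a..b, pathSpeed γ t :=
        integral_mono_on hab
          (((hζ.continuous_deriv le_rfl).abs.const_mul c).intervalIntegrable a b)
          ((continuous_pathSpeed hγ).intervalIntegrable a b)
          fun t ht => mul_abs_deriv_snd_le_pathSpeed (hc t ht)

lemma min_le_pathLength {ρ : ℝ} (h0 : (γ 0).1 = ρ) (h1 : (γ 1).1 = ρ) {c : ℝ} (hc0 : 0 ≤ c) :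
    min (2 * (ρ - c)) (c * |(γ 1).2 - (γ 0).2|) ≤ pathLength γ := by
  rw [pathLength_eq_integral_pathSpeed]
  by_cases hc : ∀ t ∈ Set.Icc (0:ℝ) 1, c ≤ (γ t).1
  · exact min_le_of_right_le (mul_abs_sub_snd_le_integral_pathSpeed hγ zero_le_one hc0 hc)
  · push Not at hc
    obtain ⟨t₀, ⟨ht₀0, ht₀1⟩, hdip⟩ := hc
    have hin := (neg_le_abs _).trans (abs_sub_fst_le_integral_pathSpeed hγ ht₀0)
    have hout := (le_abs_self _).trans (abs_sub_fst_le_integral_pathSpeed hγ ht₀1)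
    rw [h0] at hin
    rw [h1] at hout
    rw [← integral_add_adjacent_intervals ((continuous_pathSpeed hγ).intervalIntegrable 0 t₀)
      ((continuous_pathSpeed hγ).intervalIntegrable t₀ 1)]
    exact min_le_of_left_le (by linarith)

end PathSpeed

/-- Points `(1,ζ)` and `(1,ζ')` of the universal cover of the punctured plane
with `|ζ - ζ'| ≥ 4` are at distance at least 1. -/
theorem coverDist_ge_one_of_angle_far (ζ ζ' : ℝ) (h : |ζ - ζ'| ≥ 4) :
    coverDist (1, ζ) (1, ζ') ≥ 1 := by
  refine le_csInf ⟨_, fun t => (1, ζ + t * (ζ' - ζ)), by fun_prop, fun _ _ => one_pos,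
    by simp, by simp, rfl⟩ ?_
  rintro L ⟨γ, hγ, -, h0, h1, rfl⟩
  have hlen := min_le_pathLength hγ (by rw [h0]) (by rw [h1]) (c := 1 / 2) (by norm_num)
  rw [h0, h1, abs_sub_comm] at hlen
  exact le_trans (le_min (by norm_num) (by linarith)) hlen
end

section
/- Let F be the ring of finite (bounded) hyperrationals in an ultrapower *ℚ, and I the ideal of infinitesimal hyperrationals. Then I is a maximal ideal of F and the quotient field F/I is isomorphic to ℝ. -/
/-!
In any ordered field `K`, the standard part `ArchimedeanClass.stdPart` is a ring homomorphism from
the elements of non-negative Archimedean class (those bounded by a natural number) to `ℝ`, and it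
vanishes exactly on the infinitesimals. It is onto as soon as every Dedekind cut of `ℚ` is filled
in `K`; in the ultrapower the cut of `r` is filled by the germ of any rational sequence converging
to `r`, because the hyperfilter refines the cofinite filter. The ideal is the kernel, maximal
because the quotient is the field `ℝ`.
-/

open Filter

/-- The hyperrationals: the ultrapower of ℚ by the hyperfilter on ℕ. -/
abbrev Hyperrational : Type := Germ (hyperfilter ℕ : Filter ℕ) ℚ

open Topology

namespace ArchimedeanClass

theorem mk_nonneg_iff_exists_abs_lt_natCast {R : Type*} [LinearOrder R] [CommRing R]
    [IsStrictOrderedRing R] {x : R} : 0 ≤ mk x ↔ ∃ n : ℕ, |x| < n := by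
  rw [← mk_one, mk_le_mk, abs_one]
  simp only [nsmul_one]
  exact ⟨fun ⟨n, hn⟩ => ⟨n + 1, by push_cast; linarith⟩, fun ⟨n, hn⟩ => ⟨n, hn.le⟩⟩

variable {K : Type*} [LinearOrder K] [Field K] [IsOrderedRing K] {x : K}

theorem mk_pos_iff_forall_abs_lt_inv_natCast :
    0 < mk x ↔ ∀ n : ℕ, 0 < n → |x| < (n : K)⁻¹ := by
  rw [← mk_one, mk_lt_mk, abs_one]
  refine forall_congr' fun n => ?_
  rcases n.eq_zero_or_pos with rfl | hn
  · simp
  · rw [nsmul_eq_mul, ← lt_inv_mul_iff₀ (by exact_mod_cast hn), mul_one]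
    simp [hn]

theorem mk_nonneg_of_ratCast_le_of_le_ratCast {a b : ℚ} (ha : (a : K) ≤ x) (hb : x ≤ b) :
    0 ≤ mk x :=
  mk_nonneg_of_le_of_le_of_archimedean ⟨Rat.castHom K, Rat.cast_mono⟩ ha hb

theorem stdPart_eq_of_ratCast_le_of_le_ratCast (hx : 0 ≤ mk x) {r : ℝ}
    (hl : ∀ q : ℚ, q < r → (q : K) ≤ x) (hr : ∀ q : ℚ, r < q → x ≤ q) : stdPart x = r := by
  refine le_antisymm (le_of_forall_lt_rat_imp_le fun q hq => ?_)
    (le_of_forall_rat_lt_imp_le fun q hq => ?_)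
  · simpa using stdPart_monotoneOn hx (mk_ratCast_nonneg q) (hr q hq)
  · simpa using stdPart_monotoneOn (mk_ratCast_nonneg q) hx (hl q hq)

variable (K) in
noncomputable def finiteSubring : Subring K :=
  (addValuation K).toValuation.valuationSubring.toSubring

theorem mem_finiteSubring : x ∈ finiteSubring K ↔ 0 ≤ mk x := Iff.rfl

variable (K) in
noncomputable def stdPartHom : finiteSubring K →+* ℝ where
  toFun x := stdPart (x : K)
  map_one' := stdPart_one
  map_mul' x y := stdPart_mul x.2 y.2
  map_zero' := stdPart_zero
  map_add' x y := stdPart_add x.2 y.2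

theorem stdPartHom_eq_zero_iff {x : finiteSubring K} : stdPartHom K x = 0 ↔ 0 < mk (x : K) :=
  stdPart_eq_zero.trans x.2.lt_iff_ne'.symm

theorem stdPartHom_surjective
    (h : ∀ r : ℝ, ∃ x : K, (∀ q : ℚ, q < r → (q : K) ≤ x) ∧ ∀ q : ℚ, r < q → x ≤ q) :
    Function.Surjective (stdPartHom K) := fun r => by
  obtain ⟨x, hl, hr⟩ := h r
  obtain ⟨a, ha⟩ := exists_rat_lt r
  obtain ⟨b, hb⟩ := exists_rat_gt r
  have hx := mk_nonneg_of_ratCast_le_of_le_ratCast (hl a ha) (hr b hb)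
  exact ⟨⟨x, hx⟩, stdPart_eq_of_ratCast_le_of_le_ratCast hx hl hr⟩

end ArchimedeanClass

namespace Filter.Germ

variable {α : Type*} {φ : Ultrafilter α}

theorem ratCast_def {β : Type*} [DivisionRing β] [CharZero β] (q : ℚ) :
    ((fun _ ↦ (q : β) : α → β) : (φ : Filter α).Germ β) = q :=
  map_ratCast ((coeRingHom (φ : Filter α)).comp ((Pi.constRingHom α β).comp (Rat.castHom β))) q

variable {f : α → ℚ} {r : ℝ}

theorem ratCast_le_coe_of_tendsto (hf : Tendsto (fun a => (f a : ℝ)) φ (𝓝 r)) {q : ℚ}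
    (hq : q < r) : (q : (φ : Filter α).Germ ℚ) ≤ f := by
  rw [← ratCast_def]
  exact coe_le.2 <| (hf.eventually (lt_mem_nhds hq)).mono fun _ ha => by exact_mod_cast ha.le

theorem coe_le_ratCast_of_tendsto (hf : Tendsto (fun a => (f a : ℝ)) φ (𝓝 r)) {q : ℚ}
    (hq : r < q) : (f : (φ : Filter α).Germ ℚ) ≤ q := by
  rw [← ratCast_def]
  exact coe_le.2 <| (hf.eventually (gt_mem_nhds hq)).mono fun _ ha => by exact_mod_cast ha.le

theorem stdPartHom_surjective_of_le_cofinite {φ : Ultrafilter ℕ} (hφ : (φ : Filter ℕ) ≤ cofinite) :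
    Function.Surjective (ArchimedeanClass.stdPartHom ((φ : Filter ℕ).Germ ℚ)) := by
  refine ArchimedeanClass.stdPartHom_surjective fun r => ?_
  obtain ⟨f, -, -, hf⟩ := Real.exists_seq_rat_strictMono_tendsto r
  have hfφ := hf.mono_left (Nat.cofinite_eq_atTop ▸ hφ)
  exact ⟨f, fun _ => ratCast_le_coe_of_tendsto hfφ, fun _ => coe_le_ratCast_of_tendsto hfφ⟩

end Filter.Germ

open ArchimedeanClass

/-- In the hyperrationals, the finite elements form a subring F, the
infinitesimals form an ideal I of F which is maximal, and F ⧸ I ≅ ℝ. -/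
theorem finite_hyperrationals_mod_infinitesimals_iso_real :
    ∃ F : Subring Hyperrational,
      (∀ x : Hyperrational, x ∈ F ↔ ∃ n : ℕ, |x| < (n : Hyperrational)) ∧
      ∃ I : Ideal F,
        (∀ x : F, x ∈ I ↔ ∀ n : ℕ, 0 < n → |(x : Hyperrational)| < ((n : Hyperrational))⁻¹) ∧
        I.IsMaximal ∧ Nonempty ((F ⧸ I) ≃+* ℝ) := by
  have hsurj := Germ.stdPartHom_surjective_of_le_cofinite (hyperfilter_le_cofinite (α := ℕ))
  refine ⟨finiteSubring Hyperrational,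
    fun x => mem_finiteSubring.trans mk_nonneg_iff_exists_abs_lt_natCast,
    RingHom.ker (stdPartHom Hyperrational), fun x => ?_,
    RingHom.ker_isMaximal_of_surjective _ hsurj, ⟨RingHom.quotientKerEquivOfSurjective hsurj⟩⟩
  rw [RingHom.mem_ker, stdPartHom_eq_zero_iff, mk_pos_iff_forall_abs_lt_inv_natCast]
end

section
/- If every bounded sequence in a metric space M has a Cauchy subsequence, then the completion of M is a proper metric space (satisfies Heine–Borel). -/
open UniformSpace Metric

/-- If every bounded sequence in M has a Cauchy subsequence, then the completion
of M is a proper (Heine–Borel) metric space. -/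
theorem proper_completion_of_bounded_seq_cauchy_subseq (M : Type*) [MetricSpace M]
    (h : ∀ u : ℕ → M, Bornology.IsBounded (Set.range u) →
      ∃ φ : ℕ → ℕ, StrictMono φ ∧ CauchySeq (u ∘ φ)) :
    ProperSpace (UniformSpace.Completion M) := by
  constructor
  intro x r
  set S : Set M := {m | dist (↑m : Completion M) x ≤ r + 1} with hS
  -- S is totally bounded
  have htbS : TotallyBounded S := by
    by_contra H
    rw [Metric.totallyBounded_iff] at H
    push_neg at H
    obtain ⟨ε, εpos, hε⟩ := H
    obtain ⟨u, huS, hsep⟩ := exists_seq_of_forall_finset_exists (· ∈ S)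
      (fun a b => ε ≤ dist a b) (by
        intro t ht
        obtain ⟨y, hyS, hy⟩ := Set.not_subset.1 (hε t t.finite_toSet)
        refine ⟨y, hyS, fun a ha => ?_⟩
        have := fun hmem => hy (Set.mem_iUnion₂.2 ⟨a, ha, hmem⟩)
        simpa [Metric.mem_ball, dist_comm, not_lt] using this)
    have hbdd : Bornology.IsBounded (Set.range u) := by
      have : Set.range u ⊆ Metric.closedBall (u 0) (2 * (r + 1)) := by
        rintro _ ⟨n, rfl⟩
        have h1 : dist ((u n : Completion M)) x ≤ r + 1 := huS n
        have h2 : dist ((u 0 : Completion M)) x ≤ r + 1 := huS 0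
        have : dist (u n) (u 0) = dist ((u n : Completion M)) ((u 0 : Completion M)) :=
          (UniformSpace.Completion.dist_eq _ _).symm
        simp only [Metric.mem_closedBall]
        rw [this]
        calc dist ((u n : Completion M)) ((u 0 : Completion M))
            ≤ dist ((u n : Completion M)) x + dist x ((u 0 : Completion M)) := dist_triangle _ _ _
          _ ≤ (r + 1) + (r + 1) := by rw [dist_comm x]; exact add_le_add h1 h2
          _ = 2 * (r + 1) := by ring
      exact (Metric.isBounded_closedBall).subset this
    obtain ⟨φ, hφ, hcau⟩ := h u hbdd
    rw [Metric.cauchySeq_iff] at hcau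
    obtain ⟨N, hN⟩ := hcau ε εpos
    have := hN N le_rfl (N + 1) (Nat.le_succ N)
    exact absurd this (not_lt.2 (hsep (φ N) (φ (N + 1)) (hφ (Nat.lt_succ_self N))))
  -- the image under coe, and its closure, are totally bounded
  have htb : TotallyBounded (closure ((↑) '' S : Set (Completion M))) :=
    (htbS.image (UniformSpace.Completion.uniformContinuous_coe M)).closure
  -- closed ball is contained in that closure
  have hsub : Metric.closedBall x r ⊆ closure ((↑) '' S : Set (Completion M)) := by
    intro y hy
    rw [Metric.mem_closure_iff]
    intro δ δpos
    have hd : DenseRange ((↑) : M → Completion M) := UniformSpace.Completion.denseRange_coe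
    have hyc : y ∈ closure (Set.range ((↑) : M → Completion M)) := hd y
    rw [Metric.mem_closure_iff] at hyc
    obtain ⟨z, ⟨m, rfl⟩, hz⟩ := hyc (min δ 1) (lt_min δpos one_pos)
    refine ⟨(m : Completion M), ⟨m, ?_, rfl⟩, lt_of_lt_of_le hz (min_le_left _ _)⟩
    show dist ((m : Completion M)) x ≤ r + 1
    calc dist ((m : Completion M)) x ≤ dist ((m : Completion M)) y + dist y x := dist_triangle _ _ _
      _ ≤ 1 + r := add_le_add (le_of_lt (lt_of_lt_of_le (by rwa [dist_comm]) (min_le_right _ _)))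
          (Metric.mem_closedBall.1 hy)
      _ = r + 1 := by ring
  exact (TotallyBounded.isCompact_of_isClosed (htb.subset hsub) Metric.isClosed_closedBall)
end
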